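/- arXiv:2501.08033 — 2 statements merged into one kernel-verified Lean document; each statement's English description precedes it below -/
import Mathlib

section
/- For all real a, b, the absolute value of the partial derivative of f(a,b) = (1 + a*b)/sqrt((1+a^2)(1+b^2)) with respect to a is at most 1. -/
/-! The function is the cosine of the angle between the vectors `(1, a)` and `(1, b)`. Its
derivative in `a` is `(b - a) / ((1 + a²) √((1 + a²)(1 + b²)))`, and Lagrange's identity
`(b - a)² + (1 + ab)² = (1 + a²)(1 + b²)` bounds `|b - a|` by the square root, leaving
`1 / (1 + a²) ≤ 1`. -/

open Real

lemma abs_sub_le_sqrt_one_add_sq_mul_one_add_sq (a b : ℝ) :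
    |b - a| ≤ √((1 + a ^ 2) * (1 + b ^ 2)) := by
  have lagrange : (b - a) ^ 2 + (1 + a * b) ^ 2 = (1 + a ^ 2) * (1 + b ^ 2) := by ring
  rw [← sqrt_sq_eq_abs, ← lagrange]
  exact sqrt_le_sqrt (le_add_of_nonneg_right (sq_nonneg _))

lemma hasDerivAt_one_add_mul_div_sqrt (a b : ℝ) :
    HasDerivAt (fun x : ℝ => (1 + x * b) / √((1 + x ^ 2) * (1 + b ^ 2)))
      ((b - a) / ((1 + a ^ 2) * √((1 + a ^ 2) * (1 + b ^ 2)))) a := by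
  have hpos : 0 < (1 + a ^ 2) * (1 + b ^ 2) := by positivity
  have hS : 0 < √((1 + a ^ 2) * (1 + b ^ 2)) := sqrt_pos.mpr hpos
  have hnum : HasDerivAt (fun x : ℝ => 1 + x * b) b a := by
    simpa using ((hasDerivAt_id a).mul_const b).const_add 1
  have hrad : HasDerivAt (fun x : ℝ => (1 + x ^ 2) * (1 + b ^ 2)) (2 * a * (1 + b ^ 2)) a := by
    simpa using ((hasDerivAt_pow 2 a).const_add 1).mul_const (1 + b ^ 2)
  refine (hnum.div (hrad.sqrt hpos.ne') hS.ne').congr_deriv ?_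
  field_simp
  rw [sq_sqrt hpos.le]
  ring

theorem abs_partial_deriv_skewB_le_one (a b : ℝ) :
    |deriv (fun x : ℝ => (1 + x * b) / Real.sqrt ((1 + x ^ 2) * (1 + b ^ 2))) a| ≤ 1 := by
  have hS : 0 < √((1 + a ^ 2) * (1 + b ^ 2)) := sqrt_pos.mpr (by positivity)
  rw [(hasDerivAt_one_add_mul_div_sqrt a b).deriv, abs_div,
    abs_of_pos (mul_pos (by positivity) hS), div_le_one (by positivity)]
  calc |b - a| ≤ √((1 + a ^ 2) * (1 + b ^ 2)) := abs_sub_le_sqrt_one_add_sq_mul_one_add_sq a b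
    _ ≤ (1 + a ^ 2) * √((1 + a ^ 2) * (1 + b ^ 2)) :=
      le_mul_of_one_le_left hS.le (le_add_of_nonneg_right (sq_nonneg a))
end

section
/- The function f(a,b) = (1 + a*b)/sqrt((1+a^2)(1+b^2)) satisfies the Lipschitz-type bound |f(a',b') - f(a,b)| ≤ |a' - a| + |b' - b| for all real a, a', b, b'. -/
noncomputable def skewB (a b : ℝ) : ℝ := (1 + a * b) / Real.sqrt ((1 + a ^ 2) * (1 + b ^ 2))

/-! `skewB a b` is the cosine of the angle between the lines of slopes `a` and `b`, i.e.
`cos (arctan a - arctan b)`. Since `cos` and `arctan` are both `1`-Lipschitz, the angle moves by at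
most `|a' - a| + |b' - b|`, and so does its cosine. -/

namespace Real

theorem lipschitzWith_arctan : LipschitzWith 1 arctan :=
  lipschitzWith_of_nnnorm_deriv_le differentiable_arctan fun x => by
    rw [deriv_arctan, ← NNReal.coe_le_coe, coe_nnnorm, norm_of_nonneg (by positivity),
      NNReal.coe_one, div_le_one (by positivity)]
    exact le_add_of_nonneg_right (sq_nonneg x)

theorem abs_arctan_sub_arctan_le (x y : ℝ) : |arctan x - arctan y| ≤ |x - y| := by
  simpa [dist_eq] using lipschitzWith_arctan.dist_le_mul x y

end Real

open Real

theorem skewB_eq_cos_arctan_sub_arctan (a b : ℝ) :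
    skewB a b = cos (arctan a - arctan b) := by
  rw [cos_sub, cos_arctan, sin_arctan, cos_arctan, sin_arctan, skewB, sqrt_mul (by positivity)]
  field_simp

theorem skewB_lipschitz (a a' b b' : ℝ) :
    |skewB a' b' - skewB a b| ≤ |a' - a| + |b' - b| := by
  simp only [skewB_eq_cos_arctan_sub_arctan]
  calc |cos (arctan a' - arctan b') - cos (arctan a - arctan b)|
      ≤ |(arctan a' - arctan a) - (arctan b' - arctan b)| :=
        (abs_cos_sub_cos_le _ _).trans_eq (by rw [sub_sub_sub_comm])
    _ ≤ |arctan a' - arctan a| + |arctan b' - arctan b| := abs_sub _ _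
    _ ≤ |a' - a| + |b' - b| :=
        add_le_add (abs_arctan_sub_arctan_le a' a) (abs_arctan_sub_arctan_le b' b)
end
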